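/- arXiv:math/0607769 — 5 statements merged into one kernel-verified Lean document; each statement's English description precedes it below -/
import Mathlib

section
/- Let 𝒢 be an abelian category with short exact sequences 0 → A →ᶦ B →ᵖ C → 0 and 0 → K →ʲ L →𝑞 M → 0, and morphisms f : A → L, g : B → M with q ∘ f = g ∘ i. If Ext¹(C, K) = 0, then there exists h : B → L with h ∘ i = f and q ∘ h = g. -/
open CategoryTheory Limits
open CategoryTheory.Abelian.Pseudoelement Pseudoelement

universe v u

/-- Given short exact sequences `0 → A →ⁱ B →ᵖ C → 0` and
`0 → K →ʲ L →ᑫ M → 0` in an abelian category, and morphisms `f : A ⟶ L`, `g : B ⟶ M`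
with `q ∘ f = g ∘ i`, if `Ext¹(C, K) = 0` (i.e. every short exact sequence
`0 → K → T → C → 0` splits), then there is `h : B ⟶ L` with `h ∘ i = f` and `q ∘ h = g`. -/
theorem stmt2 {𝒢 : Type u} [Category.{v} 𝒢] [Abelian 𝒢]
    {A B C K L M : 𝒢} (i : A ⟶ B) (p : B ⟶ C) (j : K ⟶ L) (q : L ⟶ M)
    (w₁ : i ≫ p = 0) (w₂ : j ≫ q = 0) [Mono i] [Epi p] [Mono j] [Epi q]
    (h₁ : (ShortComplex.mk i p w₁).Exact) (h₂ : (ShortComplex.mk j q w₂).Exact)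
    (f : A ⟶ L) (g : B ⟶ M) (hcomm : f ≫ q = i ≫ g)
    (hext : ∀ (T : 𝒢) (k : K ⟶ T) (r : T ⟶ C) (w : k ≫ r = 0),
      Mono k → Epi r → (ShortComplex.mk k r w).Exact → ∃ s : C ⟶ T, s ≫ r = 𝟙 C) :
    ∃ h : B ⟶ L, i ≫ h = f ∧ h ≫ q = g := by
  -- P = L ×_M B
  set fst : pullback q g ⟶ L := pullback.fst q g with hfst
  set snd : pullback q g ⟶ B := pullback.snd q g with hsnd
  have hPcond : fst ≫ q = snd ≫ g := pullback.condition
  -- u : A ⟶ P induced by (f, i)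
  set u : A ⟶ pullback q g := pullback.lift f i hcomm with hudef
  have hu1 : u ≫ fst = f := pullback.lift_fst _ _ _
  have hu2 : u ≫ snd = i := pullback.lift_snd _ _ _
  haveI : Mono u := mono_of_mono_fac hu2
  -- k : K ⟶ P induced by (j, 0)
  set k : K ⟶ pullback q g := pullback.lift j 0 (by simp [w₂]) with hkdef
  have hk1 : k ≫ fst = j := pullback.lift_fst _ _ _
  have hk2 : k ≫ snd = 0 := pullback.lift_snd _ _ _
  haveI : Mono k := mono_of_mono_fac hk1
  haveI : Epi snd := by rw [hsnd]; infer_instance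
  -- k is a kernel of snd
  have hK : IsLimit (KernelFork.ofι k hk2) := by
    refine KernelFork.IsLimit.ofι' k hk2 (fun {W} t ht =>
      ⟨h₂.lift (t ≫ fst)
        (by rw [Category.assoc, hPcond, ← Category.assoc, ht, zero_comp]), ?_⟩)
    apply pullback.hom_ext
    · rw [Category.assoc]
      change _ ≫ k ≫ fst = _
      rw [hk1]
      exact h₂.lift_f _ _
    · rw [Category.assoc]
      change _ ≫ k ≫ snd = _
      rw [hk2, comp_zero, ht]
  have hS3 : (ShortComplex.mk k snd hk2).Exact :=
    ShortComplex.exact_of_f_is_kernel _ hK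
  -- the quotient Q = P / A
  set π : pullback q g ⟶ cokernel u := cokernel.π u with hπdef
  have huπ : u ≫ π = 0 := cokernel.condition u
  have hSπ : (ShortComplex.mk u π huπ).Exact :=
    ShortComplex.exact_of_g_is_cokernel _ (cokernelIsCokernel u)
  -- r : Q ⟶ C
  set r : cokernel u ⟶ C := cokernel.desc u (snd ≫ p)
    (by rw [← Category.assoc, hu2, w₁]) with hrdef
  have hπr : π ≫ r = snd ≫ p := cokernel.π_desc _ _ _
  haveI : Epi r := by
    haveI : Epi (snd ≫ p) := epi_comp _ _
    exact epi_of_epi_fac hπr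
  have hkπr : (k ≫ π) ≫ r = 0 := by
    rw [Category.assoc, hπr, ← Category.assoc, hk2, zero_comp]
  -- k ≫ π is mono
  haveI hmonokπ : Mono (k ≫ π) := by
    apply Abelian.Pseudoelement.mono_of_zero_of_map_zero
    intro x hx
    rw [Abelian.Pseudoelement.comp_apply] at hx
    obtain ⟨a, ha⟩ := Abelian.Pseudoelement.pseudo_exact_of_exact hSπ (k x) hx
    have ha' : u a = k x := ha
    have hia : i a = (0 : Abelian.Pseudoelement B) := by
      have h5 : i a = snd (k x) := by
        rw [← hu2, Abelian.Pseudoelement.comp_apply, ha']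
      rw [h5, ← Abelian.Pseudoelement.comp_apply, hk2,
        Abelian.Pseudoelement.zero_apply]
    have ha0 : a = 0 :=
      Abelian.Pseudoelement.zero_of_map_zero i
        (Abelian.Pseudoelement.pseudo_injective_of_mono i) a hia
    have hk0 : k x = 0 := by
      rw [← ha', ha0, Abelian.Pseudoelement.apply_zero]
    exact Abelian.Pseudoelement.zero_of_map_zero k
      (Abelian.Pseudoelement.pseudo_injective_of_mono k) x hk0
  -- exactness of  K → Q → C
  have hSQ : (ShortComplex.mk (k ≫ π) r hkπr).Exact := by
    apply Abelian.Pseudoelement.exact_of_pseudo_exact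
    intro y hy
    obtain ⟨x, hx⟩ := Abelian.Pseudoelement.pseudo_surjective_of_epi π y
    have hpx : p (snd x) = 0 := by
      rw [← Abelian.Pseudoelement.comp_apply, ← hπr,
        Abelian.Pseudoelement.comp_apply, hx, hy]
    obtain ⟨a, ha⟩ := Abelian.Pseudoelement.pseudo_exact_of_exact h₁ (snd x) hpx
    have ha' : i a = snd x := ha
    have heq : snd (u a) = snd x := by
      rw [← Abelian.Pseudoelement.comp_apply, hu2, ha']
    obtain ⟨z, hz0, hz⟩ := Abelian.Pseudoelement.sub_of_eq_image snd x (u a) heq.symm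
    have hπz : π z = y := by
      rw [hz _ π (by rw [← Abelian.Pseudoelement.comp_apply, huπ,
        Abelian.Pseudoelement.zero_apply]), hx]
    obtain ⟨w, hw⟩ := Abelian.Pseudoelement.pseudo_exact_of_exact hS3 z hz0
    have hw' : k w = z := hw
    exact ⟨w, by
      show (k ≫ π) w = y
      rw [Abelian.Pseudoelement.comp_apply, hw', hπz]⟩
  -- split the sequence
  obtain ⟨s, hs⟩ := hext (cokernel u) (k ≫ π) r hkπr hmonokπ inferInstance hSQ
  let sp := ShortComplex.Splitting.ofExactOfSection _ hSQ s hs hmonokπ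
  have hρ : (k ≫ π) ≫ sp.r = 𝟙 K := sp.f_r
  -- e : P ⟶ P killing K, and the induced section σ : B ⟶ P
  set e : pullback q g ⟶ pullback q g := 𝟙 _ - π ≫ sp.r ≫ k with hedef
  have hke : k ≫ e = 0 := by
    rw [hedef, Preadditive.comp_sub, Category.comp_id,
      show k ≫ π ≫ sp.r ≫ k = ((k ≫ π) ≫ sp.r) ≫ k by simp only [Category.assoc],
      hρ, Category.id_comp, sub_self]
  set σ : B ⟶ pullback q g := hS3.desc e hke with hσdef
  have hsndσ : snd ≫ σ = e := hS3.g_desc e hke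
  have hue : u ≫ e = u := by
    rw [hedef, Preadditive.comp_sub, Category.comp_id,
      show u ≫ π ≫ sp.r ≫ k = ((u ≫ π) ≫ sp.r) ≫ k by simp only [Category.assoc],
      huπ, zero_comp, zero_comp, sub_zero]
  have hiσ : i ≫ σ = u := by
    rw [← hu2, Category.assoc, hsndσ, hue]
  have hσsnd : σ ≫ snd = 𝟙 B := by
    rw [← cancel_epi snd, ← Category.assoc, hsndσ, hedef, Preadditive.sub_comp, Category.id_comp,
      show (π ≫ sp.r ≫ k) ≫ snd = π ≫ sp.r ≫ (k ≫ snd) by simp only [Category.assoc],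
      hk2, comp_zero, comp_zero, sub_zero, Category.comp_id]
  refine ⟨σ ≫ fst, ?_, ?_⟩
  · rw [← Category.assoc, hiσ, hu1]
  · rw [Category.assoc, hPcond, ← Category.assoc, hσsnd, Category.id_comp]
end

section
/- Let (𝒜, ℬ) be a small cotorsion pair in a Grothendieck category 𝒢 with a generator G ∈ 𝒜, and generating monomorphisms I. Then a morphism p belongs to I-inj (has the right lifting property with respect to all maps in I) if and only if p is an epimorphism with kernel in ℬ. -/
open CategoryTheory Limits

universe v u

variable {𝒢 : Type u} [Category.{v} 𝒢] [Abelian 𝒢]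

/-- `Ext¹(A, B) = 0`, expressed by the splitting of every short exact sequence
`0 → B → T → A → 0`. -/
def Ext1IsZero (A B : 𝒢) : Prop :=
  ∀ (T : 𝒢) (k : B ⟶ T) (r : T ⟶ A) (w : k ≫ r = 0),
    Mono k → Epi r → (ShortComplex.mk k r w).Exact → ∃ s : A ⟶ T, s ≫ r = 𝟙 A

/-- `(𝒜, ℬ)` is a cotorsion pair: each class is the `Ext¹`-orthogonal of the other. -/
structure IsCotorsionPair (𝒜 ℬ : Set 𝒢) : Prop where
  mem_left : ∀ X : 𝒢, X ∈ 𝒜 ↔ ∀ B ∈ ℬ, Ext1IsZero X B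
  mem_right : ∀ Y : 𝒢, Y ∈ ℬ ↔ ∀ A ∈ 𝒜, Ext1IsZero A Y

/-- A set `I` of generating monomorphisms exhibiting a cotorsion pair `(𝒜, ℬ)` as *small*:
the family `f i : dom i ⟶ cod i` consists of monomorphisms, it contains the map
`0 ⟶ G` for a generator `G ∈ 𝒜` (the index `i₀`), the cokernels of its members
cogenerate the pair, and surjectivity of all `Hom(f i, X)` forces `X ∈ ℬ`. -/
structure SmallCotorsionData (𝒜 ℬ : Set 𝒢) where
  ι : Type v
  dom : ι → 𝒢
  cod : ι → 𝒢
  f : ∀ i, dom i ⟶ cod i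
  mono : ∀ i, Mono (f i)
  i₀ : ι
  dom_i₀_zero : IsZero (dom i₀)
  cod_i₀_separator : IsSeparator (cod i₀)
  cod_i₀_mem : cod i₀ ∈ 𝒜
  cogenerates : ∀ Y : 𝒢, Y ∈ ℬ ↔ ∀ i, Ext1IsZero (cokernel (f i)) Y
  detects : ∀ X : 𝒢,
    (∀ i, Function.Surjective (fun g : cod i ⟶ X => f i ≫ g)) → X ∈ ℬ

/-!
Given a square from a monomorphism `f : D ⟶ C` to an epimorphism `p` with kernel `K`, pull `p`
back along the bottom map: this gives a short exact sequence `0 → K → P → C → 0` and a lift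
`u : D ⟶ P` of `f`, and a diagonal filler is the same as a section of `P ⟶ C` extending `u`.
Dividing out by `u` yields `0 → K → coker u → coker f → 0`, which splits since
`Ext¹(coker f, K) = 0`; the resulting retraction of `K ⟶ P` vanishes on `u`, so the
complementary section of `P ⟶ C` extends `u`. Conversely, lifting against `0 ⟶ G` for the
separator `G` makes `p` epi, and lifting against the maps of `I` makes every `Hom(f i, ker p)`
surjective, which puts `ker p` in `ℬ`.
-/

lemma Ext1IsZero.exists_retraction {S : ShortComplex 𝒢} (h : Ext1IsZero S.X₃ S.X₁)
    (hS : S.ShortExact) : ∃ r : S.X₂ ⟶ S.X₁, S.f ≫ r = 𝟙 _ := by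
  obtain ⟨s, hs⟩ := h S.X₂ S.f S.g S.zero hS.mono_f hS.epi_g hS.exact
  exact ⟨(ShortComplex.Splitting.ofExactOfSection S hS.exact s hs hS.mono_f).r,
    ShortComplex.Splitting.f_r _⟩

namespace CategoryTheory.ShortComplex

variable (S : ShortComplex 𝒢) {D : 𝒢} {f : D ⟶ S.X₃} (u : D ⟶ S.X₂) (hu : u ≫ S.g = f)

noncomputable abbrev cokernelSequenceOfLift : ShortComplex 𝒢 where
  X₁ := S.X₁
  X₂ := cokernel u
  X₃ := cokernel f
  f := S.f ≫ cokernel.π u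
  g := cokernel.desc u (S.g ≫ cokernel.π f) (by rw [← Category.assoc, hu, cokernel.condition])
  zero := by simp

variable {S}

lemma ShortExact.cokernelSequenceOfLift [Mono f] (hS : S.ShortExact) :
    (S.cokernelSequenceOfLift u hu).ShortExact := by
  have := hS.mono_f
  have : Mono u := mono_of_mono_fac hu
  have hu_ker := Abelian.monoIsKernelOfCokernel _ (cokernelIsCokernel u)
  have hf_ker := Abelian.monoIsKernelOfCokernel _ (cokernelIsCokernel f)
  have hmono : Mono (S.f ≫ cokernel.π u) := by
    refine Preadditive.mono_of_cancel_zero _ fun z hz => ?_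
    obtain ⟨w, hw⟩ := KernelFork.IsLimit.lift' hu_ker (z ≫ S.f) (by simpa using hz)
    dsimp at hw
    have hw0 : w = 0 := by
      rw [← cancel_mono f, zero_comp, ← hu, reassoc_of% hw, S.zero, comp_zero]
    rw [← cancel_mono S.f, zero_comp, ← hw, hw0, zero_comp]
  have hepi : Epi (S.cokernelSequenceOfLift u hu).g := by
    have := hS.epi_g
    exact epi_of_epi_fac (cokernel.π_desc _ _ _)
  refine .mk' ?_ hmono hepi
  rw [exact_iff_exact_up_to_refinements]
  intro A x hx
  obtain ⟨A', π, hπ, y, hy⟩ := surjective_up_to_refinements_of_epi (cokernel.π u) x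
  obtain ⟨d, hd⟩ := KernelFork.IsLimit.lift' hf_ker (y ≫ S.g) (by
    have := π ≫= hx
    rwa [reassoc_of% hy, cokernel.π_desc, comp_zero, ← Category.assoc] at this)
  dsimp at hd
  obtain ⟨k, hk⟩ := KernelFork.IsLimit.lift' hS.fIsKernel (y - d ≫ u) (by
    simp [hu, hd])
  dsimp at hk
  exact ⟨A', π, hπ, k, by simp [hy, reassoc_of% hk]⟩

lemma ShortExact.exists_section_comp_eq {S : ShortComplex 𝒢} (hS : S.ShortExact)
    {D : 𝒢} {f : D ⟶ S.X₃} [Mono f] (u : D ⟶ S.X₂) (hu : u ≫ S.g = f)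
    (h : Ext1IsZero (cokernel f) S.X₁) :
    ∃ s : S.X₃ ⟶ S.X₂, s ≫ S.g = 𝟙 _ ∧ f ≫ s = u := by
  obtain ⟨ρ, hρ⟩ := h.exists_retraction (hS.cokernelSequenceOfLift u hu)
  let sp := Splitting.ofExactOfRetraction S hS.exact (cokernel.π u ≫ ρ)
    (by simpa using hρ) hS.epi_g
  refine ⟨sp.s, sp.s_g, ?_⟩
  have hur : u ≫ sp.r = 0 := (cokernel.condition_assoc u ρ).trans zero_comp
  rw [← hu, Category.assoc, sp.g_s, Preadditive.comp_sub, Category.comp_id, reassoc_of% hur,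
    zero_comp, sub_zero]

end CategoryTheory.ShortComplex

lemma shortExact_kernel_pullback_fst {X Y C : 𝒢} (p : X ⟶ Y) [Epi p] (b : C ⟶ Y) :
    (ShortComplex.mk (pullback.lift 0 (kernel.ι p) (by simp))
      (pullback.fst b p) (pullback.lift_fst _ _ _)).ShortExact := by
  refine .mk' ?_ (mono_of_mono_fac (pullback.lift_snd _ _ _)) inferInstance
  rw [ShortComplex.exact_iff_exact_up_to_refinements]
  intro A x hx
  refine ⟨A, 𝟙 A, inferInstance, kernel.lift p (x ≫ pullback.snd b p) ?_, ?_⟩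
  · rw [Category.assoc, ← pullback.condition, reassoc_of% hx, zero_comp]
  · apply pullback.hom_ext <;> simp [hx, pullback.lift_fst, pullback.lift_snd]

lemma hasLiftingProperty_of_ext1IsZero {D C X Y : 𝒢} (f : D ⟶ C) [Mono f] (p : X ⟶ Y) [Epi p]
    (h : Ext1IsZero (cokernel f) (kernel p)) : HasLiftingProperty f p where
  sq_hasLift {t b} sq := by
    obtain ⟨s, hs, hfs⟩ := (shortExact_kernel_pullback_fst p b).exists_section_comp_eq
      (pullback.lift f t sq.w.symm) (pullback.lift_fst _ _ _) h
    exact ⟨⟨{ l := s ≫ pullback.snd b p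
              fac_left := by rw [reassoc_of% hfs, pullback.lift_snd]
              fac_right := by
                rw [Category.assoc, ← pullback.condition, reassoc_of% hs] }⟩⟩

lemma epi_of_hasLiftingProperty_of_isSeparator {C : Type*} [Category C] [HasZeroMorphisms C]
    {D G X Y : C} (i : D ⟶ G) (hD : IsZero D) (hG : IsSeparator G) (p : X ⟶ Y)
    [HasLiftingProperty i p] : Epi p where
  left_cancellation u v huv := hG.def u v fun g => by
    have sq : CommSq 0 i p g := ⟨hD.eq_of_src _ _⟩
    rw [← sq.fac_right, Category.assoc, Category.assoc, huv]

lemma surjective_comp_kernel_of_hasLiftingProperty {C : Type*} [Category C] [HasZeroMorphisms C]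
    {A B X Y : C} (i : A ⟶ B) (p : X ⟶ Y) [HasKernel p] [HasLiftingProperty i p] :
    Function.Surjective (fun g : B ⟶ kernel p => i ≫ g) := fun g => by
  have sq : CommSq (g ≫ kernel.ι p) i p 0 := ⟨by simp⟩
  exact ⟨kernel.lift p sq.lift (by simp), by ext; simp⟩

theorem stmt3_general (𝒜 ℬ : Set 𝒢) (I : SmallCotorsionData 𝒜 ℬ) {X Y : 𝒢} (p : X ⟶ Y) :
    (∀ i, HasLiftingProperty (I.f i) p) ↔ (Epi p ∧ kernel p ∈ ℬ) := by
  constructor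
  · intro h
    have := h I.i₀
    refine ⟨epi_of_hasLiftingProperty_of_isSeparator (I.f I.i₀) I.dom_i₀_zero
      I.cod_i₀_separator p, I.detects _ fun i => ?_⟩
    have := h i
    exact surjective_comp_kernel_of_hasLiftingProperty (I.f i) p
  · rintro ⟨_, hK⟩ i
    have := I.mono i
    exact hasLiftingProperty_of_ext1IsZero (I.f i) p ((I.cogenerates _).1 hK i)

/-- For a small cotorsion pair `(𝒜, ℬ)` in a Grothendieck category with
a generator `G ∈ 𝒜` and generating monomorphisms `I`, a morphism `p` lies in `I`-inj
(has the right lifting property with respect to every map of `I`) if and only if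
`p` is an epimorphism with kernel in `ℬ`. -/
theorem stmt3 [HasColimits 𝒢] [AB5 𝒢] (𝒜 ℬ : Set 𝒢)
    (hpair : IsCotorsionPair 𝒜 ℬ) (I : SmallCotorsionData 𝒜 ℬ)
    {X Y : 𝒢} (p : X ⟶ Y) :
    (∀ i, HasLiftingProperty (I.f i) p) ↔ (Epi p ∧ kernel p ∈ ℬ) :=
  stmt3_general 𝒜 ℬ I p
end

section
/- Let 𝒢 be an abelian category with generator G, and let X be a chain complex in Ch(𝒢). If every chain map Sⁿ(G) → X extends along the canonical inclusion Sⁿ(G) → D^{n+1}(G) for all n, then X is exact (acyclic). -/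
open CategoryTheory Limits

universe v u

/-!
A complex is exact at `Xₙ` when `X_{n+1} ⟶ Zₙ` is an epimorphism onto the cycles. Since `G`
separates morphisms, a map is an epimorphism as soon as every morphism out of `G` factors through
it; and a morphism `G ⟶ Zₙ` is a cycle `G ⟶ Xₙ`, which by hypothesis is a boundary.
-/

theorem CategoryTheory.IsSeparator.epi_of_forall_exists_comp_eq {C : Type u} [Category.{v} C]
    {G : C} (hG : IsSeparator G) {X Y : C} (f : X ⟶ Y)
    (hf : ∀ g : G ⟶ Y, ∃ ℓ : G ⟶ X, ℓ ≫ f = g) : Epi f where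
  left_cancellation h k hhk := hG.def h k fun g => by
    obtain ⟨ℓ, rfl⟩ := hf g
    simp only [Category.assoc, hhk]

theorem CategoryTheory.ShortComplex.exact_of_isSeparator {C : Type u} [Category.{v} C]
    [Preadditive C] (S : ShortComplex C) [S.HasHomology] {G : C} (hG : IsSeparator G)
    (hS : ∀ x : G ⟶ S.X₂, x ≫ S.g = 0 → ∃ y : G ⟶ S.X₁, y ≫ S.f = x) : S.Exact := by
  rw [S.exact_iff_epi_toCycles]
  refine hG.epi_of_forall_exists_comp_eq _ fun z => ?_
  obtain ⟨y, hy⟩ := hS (z ≫ S.iCycles) (by simp)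
  exact ⟨y, by rw [← cancel_mono S.iCycles, Category.assoc, S.toCycles_i, hy]⟩

/-- Let `𝒢` be an abelian category with generator `G`, and `X` a chain
complex in `Ch(𝒢)`.  A chain map `Sⁿ(G) ⟶ X` is the same as a morphism `f : G ⟶ Xₙ` with
`f ≫ d = 0`, and an extension of it along the inclusion `Sⁿ(G) ⟶ D^{n+1}(G)` is the same
as a morphism `g : G ⟶ X_{n+1}` with `g ≫ d = f`.  If every chain map `Sⁿ(G) ⟶ X`
extends along `Sⁿ(G) ⟶ D^{n+1}(G)` (for all `n`), then `X` is exact. -/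
theorem stmt6 {𝒢 : Type u} [Category.{v} 𝒢] [Abelian 𝒢] (G : 𝒢)
    (hG : IsSeparator G) (X : ChainComplex 𝒢 ℤ)
    (hext : ∀ (n : ℤ) (f : G ⟶ X.X n), f ≫ X.d n (n - 1) = 0 →
      ∃ g : G ⟶ X.X (n + 1), g ≫ X.d (n + 1) n = f) :
    ∀ n : ℤ, X.ExactAt n := by
  intro n
  rw [X.exactAt_iff' (n + 1) n (n - 1) (by simp) (by simp)]
  exact (X.sc' (n + 1) n (n - 1)).exact_of_isSeparator hG (hext n)
end

section
/- Let 𝒢 be a locally κ-generated Grothendieck category and g : X → Y an epimorphism with Y κ-generated. Then there exists a κ-generated subobject X' ⊆ X such that the restriction of g to X' is still an epimorphism onto Y. -/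
open CategoryTheory Limits

universe v u

/-- A family of subobjects is `κ`-filtered (κ-directed): every subfamily of
cardinality `< κ` has an upper bound within the family. -/
def KappaFilteredFamily {C : Type u} [Category.{v} C] {X : C}
    (κ : Cardinal.{v}) {ι : Type v} (S : ι → Subobject X) : Prop :=
  ∀ t : Set ι, Cardinal.mk t < κ → ∃ j, ∀ i ∈ t, S i ≤ S j

/-- An object `Y` is `κ`-generated: whenever `Y` is a `κ`-filtered union of subobjects
`Y = Σᵢ Yᵢ`, then `Y = Yᵢ` for some `i`. -/
def IsKappaGenerated {C : Type u} [Category.{v} C] [Abelian C] [HasColimits C]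
    [WellPowered.{v} C] (κ : Cardinal.{v}) (Y : C) : Prop :=
  ∀ {ι : Type v} (S : ι → Subobject Y), KappaFilteredFamily κ S →
    @iSup _ _ (Subobject.completeSemilatticeSup.{v}).toSupSet S = ⊤ → ∃ i, S i = ⊤

/-- The category is locally `κ`-generated: every object is a `κ`-filtered union of
`κ`-generated subobjects. -/
def LocallyKappaGenerated (C : Type u) [Category.{v} C] [Abelian C] [HasColimits C]
    [WellPowered.{v} C] (κ : Cardinal.{v}) : Prop :=
  ∀ X : C, ∃ (ι : Type v) (S : ι → Subobject X),
    KappaFilteredFamily κ S ∧ (∀ i, IsKappaGenerated κ ((S i : C))) ∧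
      @iSup _ _ (Subobject.completeSemilatticeSup.{v}).toSupSet S = ⊤

/-! The images `g(Xᵢ)` of the κ-generated pieces of a κ-filtered decomposition `X = Σ Xᵢ` form a
κ-filtered family of subobjects of `Y`, and their union is `Y` because `X = Σ Xᵢ` lies in the
pullback of that union along the epimorphism `g`. As `Y` is κ-generated, some `g(Xᵢ)` is all
of `Y`, i.e. `Xᵢ ⟶ Y` is an epimorphism. -/

theorem KappaFilteredFamily.comp_monotone {C D : Type*} [Category C] [Category D] {X : C} {Y : D}
    {κ : Cardinal} {ι : Type*} {S : ι → Subobject X} (hS : KappaFilteredFamily κ S)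
    {f : Subobject X → Subobject Y} (hf : Monotone f) : KappaFilteredFamily κ (f ∘ S) := by
  intro t ht
  obtain ⟨j, hj⟩ := hS t ht
  exact ⟨j, fun i hi => hf (hj i hi)⟩

section

variable {C : Type u} [Category.{v} C]

theorem monotone_imageSubobject_arrow_comp [HasImages C] {X Y : C} (g : X ⟶ Y) :
    Monotone fun S : Subobject X => imageSubobject (S.arrow ≫ g) := by
  intro S S' h
  dsimp only
  rw [← Subobject.ofLE_arrow h, Category.assoc]
  exact imageSubobject_comp_le _ _

theorem le_pullback_imageSubobject_arrow_comp [HasImages C] [HasPullbacks C] {X Y : C}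
    (g : X ⟶ Y) (S : Subobject X) :
    S ≤ (Subobject.pullback g).obj (imageSubobject (S.arrow ≫ g)) :=
  Subobject.le_of_factors <| (pullback_factors_iff g _ S.arrow).2 <|
    by simpa using imageSubobject_factors_comp_self (S.arrow ≫ g) (𝟙 _)

theorem Subobject.eq_top_of_factors_of_epi [Balanced C] {X Y : C} {P : Subobject Y}
    (g : X ⟶ Y) [Epi g] (h : P.Factors g) : P = ⊤ := by
  obtain ⟨k, hk⟩ := (Subobject.factors_iff P g).1 h
  have : Epi P.arrow := epi_of_epi_fac hk
  exact (Subobject.isIso_arrow_iff_eq_top P).1 (isIso_of_mono_of_epi _)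

theorem epi_of_imageSubobject_eq_top [HasImages C] [HasEqualizers C] {X Y : C} {f : X ⟶ Y}
    (h : imageSubobject f = ⊤) : Epi f := by
  have : IsIso (imageSubobject f).arrow := (Subobject.isIso_arrow_iff_eq_top _).2 h
  rw [← imageSubobject_arrow_comp f]
  exact epi_comp _ _

theorem iSup_imageSubobject_arrow_comp_eq_top [WellPowered.{v} C] [HasCoproducts.{v} C]
    [HasImages C] [HasPullbacks C] [Balanced C] {X Y : C} {ι : Type v} {S : ι → Subobject X}
    (hS : @iSup _ _ (Subobject.completeSemilatticeSup.{v}).toSupSet S = ⊤) (g : X ⟶ Y) [Epi g] :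
    @iSup _ _ (Subobject.completeSemilatticeSup.{v}).toSupSet
      (fun i => imageSubobject ((S i).arrow ≫ g)) = ⊤ := by
  let : CompleteSemilatticeSup (Subobject X) := Subobject.completeSemilatticeSup.{v}
  let : CompleteSemilatticeSup (Subobject Y) := Subobject.completeSemilatticeSup.{v}
  set T := ⨆ i, imageSubobject ((S i).arrow ≫ g)
  have hT : (Subobject.pullback g).obj T = ⊤ := by
    refine top_le_iff.1 (hS ▸ sSup_le (Set.forall_mem_range.2 fun i => ?_))
    exact (le_pullback_imageSubobject_arrow_comp g (S i)).trans <|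
      (Subobject.pullback g).monotone (le_sSup (Set.mem_range_self i))
  refine Subobject.eq_top_of_factors_of_epi g ?_
  simpa using (pullback_factors_iff g T (𝟙 X)).1 (hT ▸ Subobject.top_factors _)

end

theorem stmt9_general {𝒢 : Type u} [Category.{v} 𝒢] [Abelian 𝒢] [HasColimits 𝒢]
    [WellPowered.{v} 𝒢] (κ : Cardinal.{v})
    (hloc : LocallyKappaGenerated 𝒢 κ) {X Y : 𝒢} (g : X ⟶ Y) [Epi g]
    (hY : IsKappaGenerated κ Y) :
    ∃ X' : Subobject X, IsKappaGenerated κ (X' : 𝒢) ∧ Epi (X'.arrow ≫ g) := by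
  obtain ⟨ι, S, hfil, hgen, hsup⟩ := hloc X
  obtain ⟨i, hi⟩ := hY _ (hfil.comp_monotone (monotone_imageSubobject_arrow_comp g))
    (iSup_imageSubobject_arrow_comp_eq_top hsup g)
  exact ⟨S i, hgen i, epi_of_imageSubobject_eq_top hi⟩

/-- Let `𝒢` be a locally `κ`-generated Grothendieck category and
`g : X ⟶ Y` an epimorphism with `Y` κ-generated.  Then there is a κ-generated subobject
`X' ⊆ X` such that the restriction of `g` to `X'` is still an epimorphism onto `Y`. -/
theorem stmt9 {𝒢 : Type u} [Category.{v} 𝒢] [Abelian 𝒢] [HasColimits 𝒢] [AB5 𝒢]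
    [WellPowered.{v} 𝒢] (κ : Cardinal.{v}) (hκ : κ.IsRegular)
    (hloc : LocallyKappaGenerated 𝒢 κ) {X Y : 𝒢} (g : X ⟶ Y) [Epi g]
    (hY : IsKappaGenerated κ Y) :
    ∃ X' : Subobject X, IsKappaGenerated κ (X' : 𝒢) ∧ Epi (X'.arrow ≫ g) :=
  stmt9_general κ hloc g hY
end

section
/- Let (X, 𝒪_X) be a ringed space and p ∈ X. If C is a cotorsion 𝒪_{X,p}-module, then the skyscraper sheaf S_p(C) is a cotorsion 𝒪_X-module, i.e., Ext¹(F, S_p(C)) = 0 for every flat 𝒪_X-module F. -/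
/-!
The stalk functor at `p` and the skyscraper functor `S_p` form an adjoint pair of exact
functors. Applied degreewise to complexes they remain adjoint, and since both preserve
quasi-isomorphisms the adjunction descends to the derived categories, where it commutes with
shifts and with the embedding of objects as complexes concentrated in degree `0`. This yields
`Ext¹(F, S_p C) ≅ Ext¹(F_p, C)`, and the right-hand side vanishes because `F_p` is flat and
`C` is cotorsion.
-/

open CategoryTheory Limits Abelian TopologicalSpace

universe w w' u

instance instCategorySheafOfModulesTop (X : TopCat.{u}) (R' : TopCat.Sheaf RingCat.{u} X) :
    Category.{u} (SheafOfModules.{u} R') :=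
  SheafOfModules.instCategory

noncomputable instance instAbelianSheafOfModulesTop (X : TopCat.{u})
    (R' : TopCat.Sheaf RingCat.{u} X) : Abelian (SheafOfModules.{u} R') :=
  SheafOfModules.instAbelian (R := R')

namespace CategoryTheory.Adjunction

variable {A B : Type*} [Category A] [Category B] {L : A ⥤ B} {R : B ⥤ A}

noncomputable def mapHomologicalComplex [HasZeroMorphisms A] [HasZeroMorphisms B]
    [L.PreservesZeroMorphisms] [R.PreservesZeroMorphisms] (adj : L ⊣ R)
    {ι : Type*} (c : ComplexShape ι) :
    L.mapHomologicalComplex c ⊣ R.mapHomologicalComplex c :=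
  Adjunction.mkOfUnitCounit
    { unit :=
        { app K :=
            { f i := adj.unit.app (K.X i)
              comm' i j _ := (adj.unit.naturality (K.d i j)).symm }
          naturality _ _ f := by ext i; exact adj.unit.naturality (f.f i) }
      counit :=
        { app K :=
            { f i := adj.counit.app (K.X i)
              comm' i j _ := (adj.counit.naturality (K.d i j)).symm }
          naturality _ _ f := by ext i; exact adj.counit.naturality (f.f i) }
      left_triangle := by
        ext K i; exact (_ ≫= Category.id_comp _).trans (adj.left_triangle_components (K.X i))
      right_triangle := by
        ext K i; exact (_ ≫= Category.id_comp _).trans (adj.right_triangle_components (K.X i)) }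

variable [Abelian A] [Abelian B]

noncomputable def mapDerivedCategory (adj : L ⊣ R) [HasDerivedCategory A] [HasDerivedCategory B]
    [L.Additive] [R.Additive] [PreservesFiniteLimits L] [PreservesFiniteColimits L]
    [PreservesFiniteLimits R] [PreservesFiniteColimits R] :
    L.mapDerivedCategory ⊣ R.mapDerivedCategory :=
  letI : CatCommSq (L.mapHomologicalComplex (ComplexShape.up ℤ))
    DerivedCategory.Q DerivedCategory.Q L.mapDerivedCategory := ⟨L.mapDerivedCategoryFactors.symm⟩
  letI : CatCommSq (R.mapHomologicalComplex (ComplexShape.up ℤ))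
    DerivedCategory.Q DerivedCategory.Q R.mapDerivedCategory := ⟨R.mapDerivedCategoryFactors.symm⟩
  (adj.mapHomologicalComplex _).localization DerivedCategory.Q
    (HomologicalComplex.quasiIso A _) DerivedCategory.Q (HomologicalComplex.quasiIso B _)
    L.mapDerivedCategory R.mapDerivedCategory

noncomputable def extEquiv (adj : L ⊣ R) [PreservesFiniteLimits L] [PreservesFiniteColimits R]
    [HasExt.{w} A] [HasExt.{w'} B] (X : A) (Y : B) (n : ℕ) :
    Ext.{w} X (R.obj Y) n ≃ Ext.{w'} (L.obj X) Y n :=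
  letI := HasDerivedCategory.standard A
  letI := HasDerivedCategory.standard B
  have := adj.isLeftAdjoint
  have := adj.isRightAdjoint
  have := L.additive_of_preserves_binary_products
  have := adj.right_adjoint_additive
  Ext.homEquiv.trans <|
    (Iso.homCongr (Iso.refl _)
      ((shiftFunctor _ (n : ℤ)).mapIso ((R.mapDerivedCategorySingleFunctor 0).app Y).symm ≪≫
        ((R.mapDerivedCategory.commShiftIso (n : ℤ)).app _).symm)).trans <|
    (adj.mapDerivedCategory.homEquiv _ _).symm.trans <|
    (Iso.homCongr ((L.mapDerivedCategorySingleFunctor 0).app X) (Iso.refl _)).trans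
    (Ext.homEquiv (X := L.obj X) (Y := Y) (n := n)).symm

end CategoryTheory.Adjunction

theorem stmt17_general (X : TopCat.{u}) (p : X) (R : TopCat.Sheaf CommRingCat.{u} X)
    (R' : TopCat.Sheaf RingCat.{u} X)
    [HasExt.{w} (SheafOfModules.{u} R')]
    [HasExt.{w'} (ModuleCat.{u} (R.presheaf.stalk p))]
    (stalkAt : ∀ q : X, SheafOfModules.{u} R' ⥤ ModuleCat.{u} (R.presheaf.stalk q))
    (skyscraper : ModuleCat.{u} (R.presheaf.stalk p) ⥤ SheafOfModules.{u} R')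
    (adj : stalkAt p ⊣ skyscraper)
    [∀ q, PreservesFiniteLimits (stalkAt q)]
    [PreservesFiniteColimits skyscraper]
    (C : ModuleCat.{u} (R.presheaf.stalk p))
    (hC : ∀ G : ModuleCat.{u} (R.presheaf.stalk p),
      Module.Flat (R.presheaf.stalk p) G → Subsingleton (Ext.{w'} G C 1)) :
    ∀ F : SheafOfModules.{u} R',
      (∀ q : X, Module.Flat (R.presheaf.stalk q) ((stalkAt q).obj F)) →
        Subsingleton (Ext.{w} F (skyscraper.obj C) 1) := by
  intro F hF
  have := hC _ (hF p)
  exact (adj.extEquiv F C 1).subsingleton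

/-- Let `(X, 𝒪_X)` be a ringed space and `p ∈ X`.  Write `𝒪_X-Mod` for
the category of sheaves of `𝒪_X`-modules, with exact stalk functors
`(−)_q : 𝒪_X-Mod ⥤ 𝒪_{X,q}-Mod` for each `q ∈ X`, and let the skyscraper functor `S_p` at
`p` be the right adjoint of `(−)_p`; `S_p` is exact.  An `𝒪_X`-module `F` is flat iff all
its stalks are flat.  If `C` is a cotorsion `𝒪_{X,p}`-module (i.e. `Ext¹(G, C) = 0` for
every flat `𝒪_{X,p}`-module `G`), then `S_p(C)` is a cotorsion `𝒪_X`-module: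
`Ext¹(F, S_p(C)) = 0` for every flat `𝒪_X`-module `F`. -/
theorem stmt17 (X : TopCat.{u}) (p : X) (R : TopCat.Sheaf CommRingCat.{u} X)
    (R' : TopCat.Sheaf RingCat.{u} X)
    (hR' : R' = (sheafCompose _ (forget₂ CommRingCat.{u} RingCat.{u})).obj R)
    [HasExt.{w} (SheafOfModules.{u} R')]
    [HasExt.{w'} (ModuleCat.{u} (R.presheaf.stalk p))]
    (stalkAt : ∀ q : X, SheafOfModules.{u} R' ⥤ ModuleCat.{u} (R.presheaf.stalk q))
    (skyscraper : ModuleCat.{u} (R.presheaf.stalk p) ⥤ SheafOfModules.{u} R')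
    (adj : stalkAt p ⊣ skyscraper)
    [∀ q, PreservesFiniteLimits (stalkAt q)] [∀ q, PreservesFiniteColimits (stalkAt q)]
    [PreservesFiniteLimits skyscraper] [PreservesFiniteColimits skyscraper]
    (C : ModuleCat.{u} (R.presheaf.stalk p))
    (hC : ∀ G : ModuleCat.{u} (R.presheaf.stalk p),
      Module.Flat (R.presheaf.stalk p) G → Subsingleton (Ext.{w'} G C 1)) :
    ∀ F : SheafOfModules.{u} R',
      (∀ q : X, Module.Flat (R.presheaf.stalk q) ((stalkAt q).obj F)) →
        Subsingleton (Ext.{w} F (skyscraper.obj C) 1) :=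
  stmt17_general X p R R' stalkAt skyscraper adj C hC
end
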